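/- (Proposition 4.) Let (Q,P) be a symplectic family with a fixed point at the origin in adapted coordinates whose bifurcation is an indefinite (cross-) bifurcation which is not transcritical, i.e. P_qq·P_εε − P_qε² < 0 and P_qq = 0 at the origin. Let A be a fixed point branch through the origin and let (p_B, ε_B) be a B-line with ε_B''(0) ≠ 0 (fork-like case). Then the limit Tr_B'(0) := lim_{q→0} (Tr_B(q) − 2)/ε_B(q) exists, and Tr_A'(0) + (1/2)·Tr_B'(0) = 0. -/

import Mathlib

open Filter Set Topology

/-- Directional derivative along a curve of an applied CLM-valued map. -/
private theorem hasDerivAt_clm_comp' {F : Type*} [NormedAddCommGroup F] [NormedSpace ℝ F]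
    {γ : ℝ → ℝ × ℝ × ℝ} {v : ℝ × ℝ × ℝ} {t : ℝ} {x : ℝ × ℝ × ℝ}
    (hγ : HasDerivAt γ v t) (hx : γ t = x)
    {W : ℝ × ℝ × ℝ → (ℝ × ℝ × ℝ) →L[ℝ] F} {W' : (ℝ × ℝ × ℝ) →L[ℝ] ((ℝ × ℝ × ℝ) →L[ℝ] F)}
    (hW : HasFDerivAt W W' x)
    {u : ℝ → ℝ × ℝ × ℝ} {u' : ℝ × ℝ × ℝ} (hu : HasDerivAt u u' t) :
    HasDerivAt (fun s => W (γ s) (u s)) (W' v (u t) + W x u') t := by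
  subst hx
  exact (hW.comp_hasDerivAt t hγ).clm_apply hu

private theorem hasDerivAt_clm_comp1 {F : Type*} [NormedAddCommGroup F] [NormedSpace ℝ F]
    {γ : ℝ → ℝ × ℝ × ℝ} {v : ℝ × ℝ × ℝ} {t : ℝ} {x : ℝ × ℝ × ℝ}
    (hγ : HasDerivAt γ v t) (hx : γ t = x)
    {W : ℝ × ℝ × ℝ → (ℝ × ℝ × ℝ) →L[ℝ] F} {W' : (ℝ × ℝ × ℝ) →L[ℝ] ((ℝ × ℝ × ℝ) →L[ℝ] F)}
    (hW : HasFDerivAt W W' x) (b : ℝ × ℝ × ℝ) :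
    HasDerivAt (fun s => W (γ s) b) (W' v b) t := by
  simpa using hasDerivAt_clm_comp' hγ hx hW (hasDerivAt_const t b)

private theorem hasDerivAt_clm_comp2 {F : Type*} [NormedAddCommGroup F] [NormedSpace ℝ F]
    {γ : ℝ → ℝ × ℝ × ℝ} {v : ℝ × ℝ × ℝ} {t : ℝ} {x : ℝ × ℝ × ℝ}
    (hγ : HasDerivAt γ v t) (hx : γ t = x)
    {W : ℝ × ℝ × ℝ → (ℝ × ℝ × ℝ) →L[ℝ] ((ℝ × ℝ × ℝ) →L[ℝ] F)}
    {W' : (ℝ × ℝ × ℝ) →L[ℝ] ((ℝ × ℝ × ℝ) →L[ℝ] ((ℝ × ℝ × ℝ) →L[ℝ] F))}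
    (hW : HasFDerivAt W W' x) (b c : ℝ × ℝ × ℝ) :
    HasDerivAt (fun s => W (γ s) b c) (W' v b c) t := by
  simpa using (hasDerivAt_clm_comp1 hγ hx hW b).clm_apply (hasDerivAt_const t c)

/-- Expansion of a CLM on `ℝ × ℝ × ℝ` in the standard basis. -/
private theorem clm_expand {F : Type*} [NormedAddCommGroup F] [NormedSpace ℝ F]
    (L : (ℝ × ℝ × ℝ) →L[ℝ] F) (x y z : ℝ) :
    L (x, y, z) = x • L (1, 0, 0) + y • L (0, 1, 0) + z • L (0, 0, 1) := by
  have h : ((x, y, z) : ℝ × ℝ × ℝ)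
      = x • ((1, 0, 0) : ℝ × ℝ × ℝ) + y • (0, 1, 0) + z • (0, 0, 1) := by
    simp [Prod.ext_iff]
  rw [h, map_add, map_add, map_smul, map_smul, map_smul]

/-- The section curve in the first coordinate. -/
private theorem hasDerivAt_sec1 {h : ℝ → ℝ → ℝ → ℝ} {q p e : ℝ}
    {D : (ℝ × ℝ × ℝ) →L[ℝ] ℝ}
    (hD : HasFDerivAt (fun z : ℝ × ℝ × ℝ => h z.1 z.2.1 z.2.2) D (q, p, e)) :
    HasDerivAt (fun s => h s p e) (D (1, 0, 0)) q := by
  have hι : HasDerivAt (fun s : ℝ => ((s, p, e) : ℝ × ℝ × ℝ)) (1, 0, 0) q := by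
    have := (hasDerivAt_id q).prodMk (hasDerivAt_const q ((p, e) : ℝ × ℝ))
    exact this
  simpa [Function.comp_def] using hD.comp_hasDerivAt q hι

private theorem hasDerivAt_sec2 {h : ℝ → ℝ → ℝ → ℝ} {q p e : ℝ}
    {D : (ℝ × ℝ × ℝ) →L[ℝ] ℝ}
    (hD : HasFDerivAt (fun z : ℝ × ℝ × ℝ => h z.1 z.2.1 z.2.2) D (q, p, e)) :
    HasDerivAt (fun s => h q s e) (D (0, 1, 0)) p := by
  have hι : HasDerivAt (fun s : ℝ => ((q, s, e) : ℝ × ℝ × ℝ)) (0, 1, 0) p := by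
    have := (hasDerivAt_const p q).prodMk ((hasDerivAt_id p).prodMk (hasDerivAt_const p e))
    simpa using this
  simpa [Function.comp_def] using hD.comp_hasDerivAt p hι

private theorem hasDerivAt_sec3 {h : ℝ → ℝ → ℝ → ℝ} {q p e : ℝ}
    {D : (ℝ × ℝ × ℝ) →L[ℝ] ℝ}
    (hD : HasFDerivAt (fun z : ℝ × ℝ × ℝ => h z.1 z.2.1 z.2.2) D (q, p, e)) :
    HasDerivAt (fun s => h q p s) (D (0, 0, 1)) e := by
  have hι : HasDerivAt (fun s : ℝ => ((q, p, s) : ℝ × ℝ × ℝ)) (0, 0, 1) e := by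
    have := (hasDerivAt_const e q).prodMk ((hasDerivAt_const e p).prodMk (hasDerivAt_id e))
    simpa using this
  simpa [Function.comp_def] using hD.comp_hasDerivAt e hι



/-- Partial derivative with respect to the first variable `q`. -/
noncomputable def Dq (f : ℝ → ℝ → ℝ → ℝ) (q p e : ℝ) : ℝ := deriv (fun s => f s p e) q
/-- Partial derivative with respect to the second variable `p`. -/
noncomputable def Dp (f : ℝ → ℝ → ℝ → ℝ) (q p e : ℝ) : ℝ := deriv (fun s => f q s e) p
/-- Partial derivative with respect to the third variable `ε`. -/
noncomputable def De (f : ℝ → ℝ → ℝ → ℝ) (q p e : ℝ) : ℝ := deriv (fun s => f q p s) e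

set_option maxHeartbeats 2000000 in
/-- **Proposition 4.**  For a fork-like bifurcation with fixed point branch `A` and
fixed point line `B` tangent to `ε = 0`, the limit
`Tr_B'(0) = lim_{q→0} (Tr_B(q) − 2)/ε_B(q)` exists and
`Tr_A'(0) + (1/2)·Tr_B'(0) = 0`. -/
theorem fork_like_trace_relation
    (Q P : ℝ → ℝ → ℝ → ℝ) (U : Set (ℝ × ℝ × ℝ)) (hU : IsOpen U) (hU0 : (0, 0, 0) ∈ U)
    (hQ : ContDiffOn ℝ (⊤ : ℕ∞) (fun z : ℝ × ℝ × ℝ => Q z.1 z.2.1 z.2.2) U)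
    (hP : ContDiffOn ℝ (⊤ : ℕ∞) (fun z : ℝ × ℝ × ℝ => P z.1 z.2.1 z.2.2) U)
    (hsymp : ∀ z ∈ U, Dq Q z.1 z.2.1 z.2.2 * Dp P z.1 z.2.1 z.2.2
      - Dp Q z.1 z.2.1 z.2.2 * Dq P z.1 z.2.1 z.2.2 = 1)
    (hQ0 : Q 0 0 0 = 0) (hP0 : P 0 0 0 = 0)
    (hQq : Dq Q 0 0 0 = 1) (hPq : Dq P 0 0 0 = 0) (hPp : Dp P 0 0 0 = 1)
    (hQe : De Q 0 0 0 = 0) (hPe : De P 0 0 0 = 0) (hQp : Dp Q 0 0 0 ≠ 0)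
    (hindef : Dq (Dq P) 0 0 0 * De (De P) 0 0 0 - (De (Dq P) 0 0 0) ^ 2 < 0)
    (hPqq : Dq (Dq P) 0 0 0 = 0)
    -- the fixed point branch A
    (rA : ℝ) (hrA : 0 < rA) (qA pA : ℝ → ℝ)
    (hqA : ContDiffOn ℝ (⊤ : ℕ∞) qA (Set.Ioo (-rA) rA))
    (hpA : ContDiffOn ℝ (⊤ : ℕ∞) pA (Set.Ioo (-rA) rA))
    (hqA0 : qA 0 = 0) (hpA0 : pA 0 = 0)
    (hfixA : ∀ e ∈ Set.Ioo (-rA) rA,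
      Q (qA e) (pA e) e = qA e ∧ P (qA e) (pA e) e = pA e)
    -- the fixed point line B, tangent to ε = 0
    (r : ℝ) (hr : 0 < r) (pB eB : ℝ → ℝ)
    (hpB : ContDiffOn ℝ (⊤ : ℕ∞) pB (Set.Ioo (-r) r)) (heB : ContDiffOn ℝ (⊤ : ℕ∞) eB (Set.Ioo (-r) r))
    (hpB0 : pB 0 = 0) (heB0 : eB 0 = 0)
    (hpB1 : deriv pB 0 = 0) (heB1 : deriv eB 0 = 0)
    (hfixB : ∀ q ∈ Set.Ioo (-r) r,
      Q q (pB q) (eB q) = q ∧ P q (pB q) (eB q) = pB q)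
    (hfork : deriv (deriv eB) 0 ≠ 0) :
    ∃ L : ℝ,
      Filter.Tendsto
        (fun q => (Dq Q q (pB q) (eB q) + Dp P q (pB q) (eB q) - 2) / eB q)
        (nhdsWithin 0 {(0 : ℝ)}ᶜ) (nhds L) ∧
      deriv (fun e => Dq Q (qA e) (pA e) e + Dp P (qA e) (pA e) e) 0 + L / 2 = 0 := by
  classical
  set f : ℝ × ℝ × ℝ → ℝ := fun z => Q z.1 z.2.1 z.2.2 with hfdef
  set g : ℝ × ℝ × ℝ → ℝ := fun z => P z.1 z.2.1 z.2.2 with hgdef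
  set e₁ : ℝ × ℝ × ℝ := (1, 0, 0) with he₁
  set e₂ : ℝ × ℝ × ℝ := (0, 1, 0) with he₂
  set e₃ : ℝ × ℝ × ℝ := (0, 0, 1) with he₃
  set z0 : ℝ × ℝ × ℝ := (0, 0, 0) with hz0
  set Df := fderiv ℝ f with hDfdef
  set Dg := fderiv ℝ g with hDgdef
  set D2f := fderiv ℝ Df with hD2fdef
  set D2g := fderiv ℝ Dg with hD2gdef
  set D3f := fderiv ℝ D2f with hD3fdef
  set D3g := fderiv ℝ D2g with hD3gdef
  have hfC : ∀ z ∈ U, ContDiffAt ℝ (⊤ : ℕ∞) f z := fun z hz => hQ.contDiffAt (hU.mem_nhds hz)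
  have hgC : ∀ z ∈ U, ContDiffAt ℝ (⊤ : ℕ∞) g z := fun z hz => hP.contDiffAt (hU.mem_nhds hz)
  have hDfC : ∀ z ∈ U, ContDiffAt ℝ (⊤ : ℕ∞) Df z := fun z hz => (hfC z hz).fderiv_right (by simp)
  have hDgC : ∀ z ∈ U, ContDiffAt ℝ (⊤ : ℕ∞) Dg z := fun z hz => (hgC z hz).fderiv_right (by simp)
  have hD2fC : ∀ z ∈ U, ContDiffAt ℝ (⊤ : ℕ∞) D2f z := fun z hz => (hDfC z hz).fderiv_right (by simp)
  have hD2gC : ∀ z ∈ U, ContDiffAt ℝ (⊤ : ℕ∞) D2g z := fun z hz => (hDgC z hz).fderiv_right (by simp)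
  have hDf : ∀ z ∈ U, HasFDerivAt f (Df z) z :=
    fun z hz => ((hfC z hz).differentiableAt (by simp)).hasFDerivAt
  have hDg : ∀ z ∈ U, HasFDerivAt g (Dg z) z :=
    fun z hz => ((hgC z hz).differentiableAt (by simp)).hasFDerivAt
  have hD2f : ∀ z ∈ U, HasFDerivAt Df (D2f z) z :=
    fun z hz => ((hDfC z hz).differentiableAt (by simp)).hasFDerivAt
  have hD2g : ∀ z ∈ U, HasFDerivAt Dg (D2g z) z :=
    fun z hz => ((hDgC z hz).differentiableAt (by simp)).hasFDerivAt
  have hD3f : ∀ z ∈ U, HasFDerivAt D2f (D3f z) z :=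
    fun z hz => ((hD2fC z hz).differentiableAt (by simp)).hasFDerivAt
  have hD3g : ∀ z ∈ U, HasFDerivAt D2g (D3g z) z :=
    fun z hz => ((hD2gC z hz).differentiableAt (by simp)).hasFDerivAt
  -- conversions between partial derivatives and fderiv
  have hDqQ : ∀ z ∈ U, Dq Q z.1 z.2.1 z.2.2 = Df z e₁ := by
    rintro ⟨q, p, e⟩ hz
    exact (hasDerivAt_sec1 (h := Q) (hDf (q, p, e) hz)).deriv
  have hDpQ : ∀ z ∈ U, Dp Q z.1 z.2.1 z.2.2 = Df z e₂ := by
    rintro ⟨q, p, e⟩ hz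
    exact (hasDerivAt_sec2 (h := Q) (hDf (q, p, e) hz)).deriv
  have hDeQ : ∀ z ∈ U, De Q z.1 z.2.1 z.2.2 = Df z e₃ := by
    rintro ⟨q, p, e⟩ hz
    exact (hasDerivAt_sec3 (h := Q) (hDf (q, p, e) hz)).deriv
  have hDqP : ∀ z ∈ U, Dq P z.1 z.2.1 z.2.2 = Dg z e₁ := by
    rintro ⟨q, p, e⟩ hz
    exact (hasDerivAt_sec1 (h := P) (hDg (q, p, e) hz)).deriv
  have hDpP : ∀ z ∈ U, Dp P z.1 z.2.1 z.2.2 = Dg z e₂ := by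
    rintro ⟨q, p, e⟩ hz
    exact (hasDerivAt_sec2 (h := P) (hDg (q, p, e) hz)).deriv
  have hDeP : ∀ z ∈ U, De P z.1 z.2.1 z.2.2 = Dg z e₃ := by
    rintro ⟨q, p, e⟩ hz
    exact (hasDerivAt_sec3 (h := P) (hDg (q, p, e) hz)).deriv
  -- values at the origin
  have vf1 : Df z0 e₁ = 1 := by rw [← hDqQ z0 hU0]; exact hQq
  have vf3 : Df z0 e₃ = 0 := by rw [← hDeQ z0 hU0]; exact hQe
  have vg1 : Dg z0 e₁ = 0 := by rw [← hDqP z0 hU0]; exact hPq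
  have vg2 : Dg z0 e₂ = 1 := by rw [← hDpP z0 hU0]; exact hPp
  have vg3 : Dg z0 e₃ = 0 := by rw [← hDeP z0 hU0]; exact hPe
  have ha : Df z0 e₂ ≠ 0 := by rw [← hDpQ z0 hU0]; exact hQp
  -- second derivative hypothesis in fderiv form
  have hγ1 : HasDerivAt (fun s : ℝ => ((s, 0, 0) : ℝ × ℝ × ℝ)) e₁ 0 := by
    rw [he₁]
    have := (hasDerivAt_id (0:ℝ)).prodMk (hasDerivAt_const (0:ℝ) ((0, 0) : ℝ × ℝ))
    exact this
  have hγ10 : (fun s : ℝ => ((s, 0, 0) : ℝ × ℝ × ℝ)) 0 = z0 := rfl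
  have hmem1 : ∀ᶠ s in 𝓝 (0:ℝ), ((s, 0, 0) : ℝ × ℝ × ℝ) ∈ U := by
    have hc : ContinuousAt (fun s : ℝ => ((s, 0, 0) : ℝ × ℝ × ℝ)) 0 := hγ1.continuousAt
    exact hc.preimage_mem_nhds (hU.mem_nhds hU0)
  have vg11 : D2g z0 e₁ e₁ = 0 := by
    have hev : (fun s => Dq P s 0 0) =ᶠ[𝓝 (0:ℝ)] fun s => Dg (s, 0, 0) e₁ := by
      filter_upwards [hmem1] with s hs
      exact hDqP (s, 0, 0) hs
    have h1 : HasDerivAt (fun s => Dg ((s, 0, 0) : ℝ × ℝ × ℝ) e₁) (D2g z0 e₁ e₁) 0 :=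
      hasDerivAt_clm_comp1 hγ1 hγ10 (hD2g z0 hU0) e₁
    have h2 : Dq (Dq P) 0 0 0 = D2g z0 e₁ e₁ := by
      show deriv (fun s => Dq P s 0 0) 0 = _
      rw [hev.deriv_eq]
      exact h1.deriv
    rw [← h2]; exact hPqq
  -- the symplectic identity in fderiv form
  have hS : ∀ z ∈ U, Df z e₁ * Dg z e₂ - Df z e₂ * Dg z e₁ = 1 := fun z hz => by
    rw [← hDqQ z hz, ← hDpP z hz, ← hDpQ z hz, ← hDqP z hz]; exact hsymp z hz
  -- first derivative of the symplectic identity, at any z ∈ U in any direction v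
  have hSder : ∀ z ∈ U, ∀ v : ℝ × ℝ × ℝ,
      D2f z v e₁ * Dg z e₂ + Df z e₁ * D2g z v e₂
        - (D2f z v e₂ * Dg z e₁ + Df z e₂ * D2g z v e₁) = 0 := by
    intro z hz v
    have hγ : HasDerivAt (fun t : ℝ => z + t • v) v 0 := by
      have h1 : HasDerivAt (fun t : ℝ => t • v) ((1:ℝ) • v) 0 := (hasDerivAt_id (0:ℝ)).smul_const v
      simpa using h1.const_add z
    have hγ0 : (fun t : ℝ => z + t • v) 0 = z := by simp
    have hmem : ∀ᶠ t in 𝓝 (0:ℝ), z + t • v ∈ U :=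
      hγ.continuousAt.preimage_mem_nhds (by simpa using hU.mem_nhds hz)
    have hF1 : HasDerivAt (fun t : ℝ => Df (z + t • v) e₁) (D2f z v e₁) 0 :=
      hasDerivAt_clm_comp1 hγ hγ0 (hD2f z hz) e₁
    have hF2 : HasDerivAt (fun t : ℝ => Df (z + t • v) e₂) (D2f z v e₂) 0 :=
      hasDerivAt_clm_comp1 hγ hγ0 (hD2f z hz) e₂
    have hG1 : HasDerivAt (fun t : ℝ => Dg (z + t • v) e₁) (D2g z v e₁) 0 :=
      hasDerivAt_clm_comp1 hγ hγ0 (hD2g z hz) e₁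
    have hG2 : HasDerivAt (fun t : ℝ => Dg (z + t • v) e₂) (D2g z v e₂) 0 :=
      hasDerivAt_clm_comp1 hγ hγ0 (hD2g z hz) e₂
    have hprod : HasDerivAt
        (fun t : ℝ => Df (z + t • v) e₁ * Dg (z + t • v) e₂
          - Df (z + t • v) e₂ * Dg (z + t • v) e₁)
        (D2f z v e₁ * Dg z e₂ + Df z e₁ * D2g z v e₂
          - (D2f z v e₂ * Dg z e₁ + Df z e₂ * D2g z v e₁)) 0 := by
      have := (hF1.mul hG2).sub (hF2.mul hG1)
      exact this.congr_deriv (by simp)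
    have hev : (fun t : ℝ => Df (z + t • v) e₁ * Dg (z + t • v) e₂
        - Df (z + t • v) e₂ * Dg (z + t • v) e₁) =ᶠ[𝓝 (0:ℝ)] fun _ => 1 := by
      filter_upwards [hmem] with t ht
      exact hS _ ht
    have h := hprod.deriv
    rw [hev.deriv_eq, deriv_const] at h
    linarith [h]
  have I1 : D2f z0 e₁ e₁ + D2g z0 e₁ e₂ = 0 := by
    have h := hSder z0 hU0 e₁
    rw [vf1, vg1, vg2, vg11] at h; linarith
  have I2 : D2f z0 e₂ e₁ + D2g z0 e₂ e₂ = Df z0 e₂ * D2g z0 e₂ e₁ := by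
    have h := hSder z0 hU0 e₂
    rw [vf1, vg1, vg2] at h; linarith
  have I3 : D2f z0 e₃ e₁ + D2g z0 e₃ e₂ = Df z0 e₂ * D2g z0 e₃ e₁ := by
    have h := hSder z0 hU0 e₃
    rw [vf1, vg1, vg2] at h; linarith
  -- second derivative of the symplectic identity along the q-axis
  have I4 : D3f z0 e₁ e₁ e₁ + 2 * (D2f z0 e₁ e₁ * D2g z0 e₁ e₂) + D3g z0 e₁ e₁ e₂
      - Df z0 e₂ * D3g z0 e₁ e₁ e₁ = 0 := by
    have hA : HasDerivAt (fun s : ℝ => D2f (s,0,0) e₁ e₁) (D3f z0 e₁ e₁ e₁) 0 :=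
      hasDerivAt_clm_comp2 hγ1 hγ10 (hD3f z0 hU0) e₁ e₁
    have hB : HasDerivAt (fun s : ℝ => Dg (s,0,0) e₂) (D2g z0 e₁ e₂) 0 :=
      hasDerivAt_clm_comp1 hγ1 hγ10 (hD2g z0 hU0) e₂
    have hC : HasDerivAt (fun s : ℝ => Df (s,0,0) e₁) (D2f z0 e₁ e₁) 0 :=
      hasDerivAt_clm_comp1 hγ1 hγ10 (hD2f z0 hU0) e₁
    have hD' : HasDerivAt (fun s : ℝ => D2g (s,0,0) e₁ e₂) (D3g z0 e₁ e₁ e₂) 0 :=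
      hasDerivAt_clm_comp2 hγ1 hγ10 (hD3g z0 hU0) e₁ e₂
    have hE : HasDerivAt (fun s : ℝ => D2f (s,0,0) e₁ e₂) (D3f z0 e₁ e₁ e₂) 0 :=
      hasDerivAt_clm_comp2 hγ1 hγ10 (hD3f z0 hU0) e₁ e₂
    have hFc : HasDerivAt (fun s : ℝ => Dg (s,0,0) e₁) (D2g z0 e₁ e₁) 0 :=
      hasDerivAt_clm_comp1 hγ1 hγ10 (hD2g z0 hU0) e₁
    have hG : HasDerivAt (fun s : ℝ => Df (s,0,0) e₂) (D2f z0 e₁ e₂) 0 :=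
      hasDerivAt_clm_comp1 hγ1 hγ10 (hD2f z0 hU0) e₂
    have hH : HasDerivAt (fun s : ℝ => D2g (s,0,0) e₁ e₁) (D3g z0 e₁ e₁ e₁) 0 :=
      hasDerivAt_clm_comp2 hγ1 hγ10 (hD3g z0 hU0) e₁ e₁
    have hprod : HasDerivAt
        (fun s : ℝ => D2f (s,0,0) e₁ e₁ * Dg (s,0,0) e₂ + Df (s,0,0) e₁ * D2g (s,0,0) e₁ e₂
          - (D2f (s,0,0) e₁ e₂ * Dg (s,0,0) e₁ + Df (s,0,0) e₂ * D2g (s,0,0) e₁ e₁))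
        (D3f z0 e₁ e₁ e₁ * Dg z0 e₂ + D2f z0 e₁ e₁ * D2g z0 e₁ e₂
          + (D2f z0 e₁ e₁ * D2g z0 e₁ e₂ + Df z0 e₁ * D3g z0 e₁ e₁ e₂)
          - (D3f z0 e₁ e₁ e₂ * Dg z0 e₁ + D2f z0 e₁ e₂ * D2g z0 e₁ e₁
            + (D2f z0 e₁ e₂ * D2g z0 e₁ e₁ + Df z0 e₂ * D3g z0 e₁ e₁ e₁))) 0 := by
      have := ((hA.mul hB).add (hC.mul hD')).sub ((hE.mul hFc).add (hG.mul hH))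
      exact this
    have hev : (fun s : ℝ => D2f (s,0,0) e₁ e₁ * Dg (s,0,0) e₂ + Df (s,0,0) e₁ * D2g (s,0,0) e₁ e₂
        - (D2f (s,0,0) e₁ e₂ * Dg (s,0,0) e₁ + Df (s,0,0) e₂ * D2g (s,0,0) e₁ e₁))
        =ᶠ[𝓝 (0:ℝ)] fun _ => 0 := by
      filter_upwards [hmem1] with s hs
      exact hSder (s,0,0) hs e₁
    have h := hprod.deriv
    rw [hev.deriv_eq, deriv_const] at h
    rw [vf1, vg1, vg2, vg11] at h
    linarith [h]
  -- symmetry of the second derivative of g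
  have hsymm : ∀ v u : ℝ × ℝ × ℝ, D2g z0 v u = D2g z0 u v := by
    intro v u
    have hev : ∀ᶠ y in 𝓝 z0, HasFDerivAt g (Dg y) y := by
      filter_upwards [hU.mem_nhds hU0] with y hy using hDg y hy
    exact second_derivative_symmetric_of_eventually hev (hD2g z0 hU0) v u

  -- ===== the B-line =====
  set IB : Set ℝ := Set.Ioo (-r) r with hIBdef
  have hIBo : IsOpen IB := isOpen_Ioo
  have h0IB : (0:ℝ) ∈ IB := ⟨by linarith, hr⟩
  set p1 := deriv pB with hp1def
  set ε1 := deriv eB with hε1def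
  set p2 := deriv p1 with hp2def
  set ε2 := deriv ε1 with hε2def
  have hp1C : ContDiffOn ℝ (⊤ : ℕ∞) p1 IB := hpB.deriv_of_isOpen hIBo (by simp)
  have hε1C : ContDiffOn ℝ (⊤ : ℕ∞) ε1 IB := heB.deriv_of_isOpen hIBo (by simp)
  have hp2C : ContDiffOn ℝ (⊤ : ℕ∞) p2 IB := hp1C.deriv_of_isOpen hIBo (by simp)
  have hε2C : ContDiffOn ℝ (⊤ : ℕ∞) ε2 IB := hε1C.deriv_of_isOpen hIBo (by simp)
  have hpB' : ∀ q ∈ IB, HasDerivAt pB (p1 q) q := fun q hq =>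
    ((hpB.contDiffAt (hIBo.mem_nhds hq)).differentiableAt (by simp)).hasDerivAt
  have heB' : ∀ q ∈ IB, HasDerivAt eB (ε1 q) q := fun q hq =>
    ((heB.contDiffAt (hIBo.mem_nhds hq)).differentiableAt (by simp)).hasDerivAt
  have hp1' : ∀ q ∈ IB, HasDerivAt p1 (p2 q) q := fun q hq =>
    ((hp1C.contDiffAt (hIBo.mem_nhds hq)).differentiableAt (by simp)).hasDerivAt
  have hε1' : ∀ q ∈ IB, HasDerivAt ε1 (ε2 q) q := fun q hq =>
    ((hε1C.contDiffAt (hIBo.mem_nhds hq)).differentiableAt (by simp)).hasDerivAt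
  have hp2d : HasDerivAt p2 (deriv p2 0) 0 :=
    ((hp2C.contDiffAt (hIBo.mem_nhds h0IB)).differentiableAt (by simp)).hasDerivAt
  have hε2d : HasDerivAt ε2 (deriv ε2 0) 0 :=
    ((hε2C.contDiffAt (hIBo.mem_nhds h0IB)).differentiableAt (by simp)).hasDerivAt
  set γB : ℝ → ℝ × ℝ × ℝ := fun q => (q, pB q, eB q) with hγBdef
  have hγB : ∀ q ∈ IB, HasDerivAt γB (1, p1 q, ε1 q) q := fun q hq =>
    (hasDerivAt_id q).prodMk ((hpB' q hq).prodMk (heB' q hq))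
  have hγB0 : γB 0 = z0 := by rw [hγBdef, hz0]; simp [hpB0, heB0]
  have hu0 : ((1:ℝ), p1 0, ε1 0) = e₁ := by rw [hpB1, heB1, he₁]
  have huB : ∀ q ∈ IB, HasDerivAt (fun q => ((1:ℝ), p1 q, ε1 q)) (0, p2 q, ε2 q) q :=
    fun q hq => (hasDerivAt_const q (1:ℝ)).prodMk ((hp1' q hq).prodMk (hε1' q hq))
  have hmemB : ∀ᶠ q in 𝓝 (0:ℝ), γB q ∈ U ∧ q ∈ IB := by
    have h1 : ∀ᶠ q in 𝓝 (0:ℝ), γB q ∈ U :=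
      (hγB 0 h0IB).continuousAt.preimage_mem_nhds (by rw [hγB0]; exact hU.mem_nhds hU0)
    exact h1.and (hIBo.mem_nhds h0IB)
  -- first order fixed point identities along B
  have hDfB : (fun q => Df (γB q) (1, p1 q, ε1 q)) =ᶠ[𝓝 (0:ℝ)] fun _ => 1 := by
    filter_upwards [hmemB.eventually_nhds] with q hq
    have hq' := hq.self_of_nhds
    have h1 : HasDerivAt (fun x => f (γB x)) (Df (γB q) (1, p1 q, ε1 q)) q :=
      (hDf _ hq'.1).comp_hasDerivAt q (hγB q hq'.2)
    have h2 : (fun x => f (γB x)) =ᶠ[𝓝 q] fun x => x := by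
      filter_upwards [hq] with x hx
      exact (hfixB x hx.2).1
    have h3 : HasDerivAt (fun x => f (γB x)) 1 q := (hasDerivAt_id q).congr_of_eventuallyEq h2
    exact h1.unique h3
  have hDgB : (fun q => Dg (γB q) (1, p1 q, ε1 q)) =ᶠ[𝓝 (0:ℝ)] p1 := by
    filter_upwards [hmemB.eventually_nhds] with q hq
    have hq' := hq.self_of_nhds
    have h1 : HasDerivAt (fun x => g (γB x)) (Dg (γB q) (1, p1 q, ε1 q)) q :=
      (hDg _ hq'.1).comp_hasDerivAt q (hγB q hq'.2)
    have h2 : (fun x => g (γB x)) =ᶠ[𝓝 q] pB := by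
      filter_upwards [hq] with x hx
      exact (hfixB x hx.2).2
    have h3 : HasDerivAt (fun x => g (γB x)) (p1 q) q :=
      (hpB' q hq'.2).congr_of_eventuallyEq h2
    exact h1.unique h3
  -- I5 : second-order fixed point identity for f along B
  have I5 : D2f z0 e₁ e₁ + Df z0 (0, p2 0, ε2 0) = 0 := by
    have hL : HasDerivAt (fun q => Df (γB q) (1, p1 q, ε1 q))
        (D2f z0 e₁ e₁ + Df z0 (0, p2 0, ε2 0)) 0 := by
      have h := hasDerivAt_clm_comp' (hγB 0 h0IB) hγB0 (hD2f z0 hU0) (huB 0 h0IB)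
      simpa only [hpB1, heB1, ← he₁] using h
    have h := hL.deriv
    rw [hDfB.deriv_eq, deriv_const] at h
    linarith [h]
  have I5v : D2f z0 e₁ e₁ + p2 0 * Df z0 e₂ = 0 := by
    have h := I5
    rw [clm_expand (Df z0) 0 (p2 0) (ε2 0), ← he₁, ← he₂, ← he₃, vf3] at h
    simp only [smul_eq_mul, zero_mul, mul_zero, zero_add, add_zero] at h
    linarith [h]
  -- I6 : third-order fixed point identity for g along B
  have hG2B : (fun q => D2g (γB q) (1, p1 q, ε1 q) (1, p1 q, ε1 q)
      + Dg (γB q) (0, p2 q, ε2 q)) =ᶠ[𝓝 (0:ℝ)] p2 := by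
    filter_upwards [hmemB, hDgB.eventuallyEq_nhds] with q hq0 hDq
    have hL : HasDerivAt (fun x => Dg (γB x) (1, p1 x, ε1 x))
        (D2g (γB q) (1, p1 q, ε1 q) (1, p1 q, ε1 q) + Dg (γB q) (0, p2 q, ε2 q)) q :=
      hasDerivAt_clm_comp' (hγB q hq0.2) rfl (hD2g _ hq0.1) (huB q hq0.2)
    have hR : HasDerivAt (fun x => Dg (γB x) (1, p1 x, ε1 x)) (p2 q) q :=
      (hp1' q hq0.2).congr_of_eventuallyEq hDq
    exact hL.unique hR
  have I6 : D3g z0 e₁ e₁ e₁ + D2g z0 (0, p2 0, ε2 0) e₁ + 2 * (D2g z0 e₁ (0, p2 0, ε2 0)) = 0 := by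
    have hm : HasDerivAt (fun q => D2g (γB q) (1, p1 q, ε1 q))
        (D3g z0 e₁ e₁ + D2g z0 (0, p2 0, ε2 0)) 0 := by
      have h := hasDerivAt_clm_comp' (hγB 0 h0IB) hγB0 (hD3g z0 hU0) (huB 0 h0IB)
      simpa only [hpB1, heB1, ← he₁] using h
    have ht1 : HasDerivAt (fun q => D2g (γB q) (1, p1 q, ε1 q) (1, p1 q, ε1 q))
        ((D3g z0 e₁ e₁ + D2g z0 (0, p2 0, ε2 0)) e₁ + D2g z0 e₁ (0, p2 0, ε2 0)) 0 := by
      have h := hm.clm_apply (huB 0 h0IB)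
      simpa only [hpB1, heB1, ← he₁, hγB0] using h
    have hu2 : HasDerivAt (fun q => ((0:ℝ), p2 q, ε2 q)) (0, deriv p2 0, deriv ε2 0) 0 :=
      (hasDerivAt_const (0:ℝ) (0:ℝ)).prodMk (hp2d.prodMk hε2d)
    have ht2 : HasDerivAt (fun q => Dg (γB q) (0, p2 q, ε2 q))
        (D2g z0 e₁ (0, p2 0, ε2 0) + Dg z0 (0, deriv p2 0, deriv ε2 0)) 0 := by
      have h := hasDerivAt_clm_comp' (hγB 0 h0IB) hγB0 (hD2g z0 hU0) hu2
      simpa only [hpB1, heB1, ← he₁] using h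
    have hLR : HasDerivAt (fun q => D2g (γB q) (1, p1 q, ε1 q) (1, p1 q, ε1 q)
        + Dg (γB q) (0, p2 q, ε2 q)) (deriv p2 0) 0 :=
      hp2d.congr_of_eventuallyEq hG2B
    have h := (ht1.add ht2).unique hLR
    have hg0 : Dg z0 (0, deriv p2 0, deriv ε2 0) = deriv p2 0 := by
      rw [clm_expand (Dg z0) 0 (deriv p2 0) (deriv ε2 0), ← he₁, ← he₂, ← he₃, vg2, vg3]
      simp [smul_eq_mul]
    rw [hg0] at h
    simp only [ContinuousLinearMap.add_apply] at h ⊢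
    linarith [h]

  -- expansion of I6
  have I6v : D3g z0 e₁ e₁ e₁ + p2 0 * D2g z0 e₂ e₁ + ε2 0 * D2g z0 e₃ e₁
      + 2 * (p2 0 * D2g z0 e₁ e₂ + ε2 0 * D2g z0 e₁ e₃) = 0 := by
    have h := I6
    rw [clm_expand (D2g z0) 0 (p2 0) (ε2 0), clm_expand (D2g z0 e₁) 0 (p2 0) (ε2 0),
      ← he₁, ← he₂, ← he₃] at h
    simp only [ContinuousLinearMap.add_apply, ContinuousLinearMap.smul_apply, smul_eq_mul,
      ContinuousLinearMap.zero_apply, zero_smul, zero_mul, mul_zero, zero_add, add_zero] at h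
    linarith [h]
  -- the trace along B and its derivative
  set φ1 : ℝ → ℝ := fun q => D2f (γB q) (1, p1 q, ε1 q) e₁ + D2g (γB q) (1, p1 q, ε1 q) e₂
    with hφ1def
  have hφ : ∀ᶠ q in 𝓝 (0:ℝ), HasDerivAt (fun x => Df (γB x) e₁ + Dg (γB x) e₂) (φ1 q) q := by
    filter_upwards [hmemB] with q hq
    exact (hasDerivAt_clm_comp1 (hγB q hq.2) rfl (hD2f _ hq.1) e₁).add
      (hasDerivAt_clm_comp1 (hγB q hq.2) rfl (hD2g _ hq.1) e₂)
  have hφ10 : φ1 0 = 0 := by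
    rw [hφ1def]
    simp only [hpB1, heB1, ← he₁, hγB0]
    exact I1
  set Φ : ℝ := (D3f z0 e₁ e₁ + D2f z0 (0, p2 0, ε2 0)) e₁
      + (D3g z0 e₁ e₁ + D2g z0 (0, p2 0, ε2 0)) e₂ with hΦdef
  have hφ1d : HasDerivAt φ1 Φ 0 := by
    have hmf : HasDerivAt (fun q => D2f (γB q) (1, p1 q, ε1 q))
        (D3f z0 e₁ e₁ + D2f z0 (0, p2 0, ε2 0)) 0 := by
      have h := hasDerivAt_clm_comp' (hγB 0 h0IB) hγB0 (hD3f z0 hU0) (huB 0 h0IB)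
      simpa only [hpB1, heB1, ← he₁] using h
    have hmg : HasDerivAt (fun q => D2g (γB q) (1, p1 q, ε1 q))
        (D3g z0 e₁ e₁ + D2g z0 (0, p2 0, ε2 0)) 0 := by
      have h := hasDerivAt_clm_comp' (hγB 0 h0IB) hγB0 (hD3g z0 hU0) (huB 0 h0IB)
      simpa only [hpB1, heB1, ← he₁] using h
    have h1 := hmf.clm_apply (hasDerivAt_const (0:ℝ) e₁)
    have h2 := hmg.clm_apply (hasDerivAt_const (0:ℝ) e₂)
    have h := h1.add h2
    rw [hφ1def, hΦdef]
    exact h.congr_deriv (by simp only [map_zero, add_zero])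
  have hΦv : Φ = D3f z0 e₁ e₁ e₁ + p2 0 * D2f z0 e₂ e₁ + ε2 0 * D2f z0 e₃ e₁
      + (D3g z0 e₁ e₁ e₂ + p2 0 * D2g z0 e₂ e₂ + ε2 0 * D2g z0 e₃ e₂) := by
    rw [hΦdef, clm_expand (D2f z0) 0 (p2 0) (ε2 0), clm_expand (D2g z0) 0 (p2 0) (ε2 0),
      ← he₁, ← he₂, ← he₃]
    simp only [ContinuousLinearMap.add_apply, ContinuousLinearMap.smul_apply, smul_eq_mul,
      ContinuousLinearMap.zero_apply, zero_smul, zero_add, add_zero, zero_mul, mul_zero]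
    ring
  -- limits
  have hφat0 : HasDerivAt (fun x => Df (γB x) e₁ + Dg (γB x) e₂) (φ1 0) 0 := hφ.self_of_nhds
  have hφval0 : Df (γB 0) e₁ + Dg (γB 0) e₂ = 2 := by
    rw [hγB0, vf1, vg2]; norm_num
  have htf : Tendsto (fun x => Df (γB x) e₁ + Dg (γB x) e₂ - 2) (𝓝[≠] (0:ℝ)) (𝓝 0) := by
    have h : Tendsto (fun x => Df (γB x) e₁ + Dg (γB x) e₂) (𝓝[≠] (0:ℝ)) (𝓝 2) := by
      rw [← hφval0]
      exact (hφat0.continuousAt.tendsto).mono_left nhdsWithin_le_nhds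
    simpa using h.sub_const 2
  have heBt : Tendsto eB (𝓝[≠] (0:ℝ)) (𝓝 0) := by
    have h : Tendsto eB (𝓝[≠] (0:ℝ)) (𝓝 (eB 0)) :=
      ((heB' 0 h0IB).continuousAt.tendsto).mono_left nhdsWithin_le_nhds
    rwa [heB0] at h
  have hslφ : Tendsto (fun q => φ1 q / q) (𝓝[≠] (0:ℝ)) (𝓝 Φ) := by
    have h := hasDerivAt_iff_tendsto_slope.mp hφ1d
    refine Filter.Tendsto.congr' ?_ h
    filter_upwards [self_mem_nhdsWithin] with q hq
    rw [slope_def_field, hφ10, sub_zero, sub_zero]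
  have hε1d0 : HasDerivAt ε1 (ε2 0) 0 := hε1' 0 h0IB
  have hslε : Tendsto (fun q => ε1 q / q) (𝓝[≠] (0:ℝ)) (𝓝 (ε2 0)) := by
    have h := hasDerivAt_iff_tendsto_slope.mp hε1d0
    refine Filter.Tendsto.congr' ?_ h
    filter_upwards [self_mem_nhdsWithin] with q hq
    rw [slope_def_field, heB1, sub_zero, sub_zero]
  have hε1ne : ∀ᶠ q in 𝓝[≠] (0:ℝ), ε1 q ≠ 0 := by
    filter_upwards [hslε.eventually_ne hfork] with q hq
    intro h0; rw [h0, zero_div] at hq; exact hq rfl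
  have hdiv : Tendsto (fun q => φ1 q / ε1 q) (𝓝[≠] (0:ℝ)) (𝓝 (Φ / ε2 0)) := by
    have h := hslφ.div hslε hfork
    refine Filter.Tendsto.congr' ?_ h
    filter_upwards [self_mem_nhdsWithin] with q hq
    have hq' : (q:ℝ) ≠ 0 := hq
    show φ1 q / q / (ε1 q / q) = φ1 q / ε1 q
    rw [div_div_div_comm, div_self hq', div_one]
  have hff' : ∀ᶠ q in 𝓝[≠] (0:ℝ),
      HasDerivAt (fun x => Df (γB x) e₁ + Dg (γB x) e₂ - 2) (φ1 q) q := by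
    filter_upwards [eventually_nhdsWithin_of_eventually_nhds hφ] with q hq
    exact hq.sub_const 2
  have hgg' : ∀ᶠ q in 𝓝[≠] (0:ℝ), HasDerivAt eB (ε1 q) q := by
    filter_upwards [eventually_nhdsWithin_of_eventually_nhds hmemB] with q hq
    exact heB' q hq.2
  have hlimit : Tendsto (fun q => (Df (γB q) e₁ + Dg (γB q) e₂ - 2) / eB q) (𝓝[≠] (0:ℝ))
      (𝓝 (Φ / ε2 0)) :=
    HasDerivAt.lhopital_zero_nhdsNE hff' hgg' hε1ne htf heBt hdiv
  have hmain : Tendsto (fun q => (Dq Q q (pB q) (eB q) + Dp P q (pB q) (eB q) - 2) / eB q)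
      (𝓝[≠] (0:ℝ)) (𝓝 (Φ / ε2 0)) := by
    refine Filter.Tendsto.congr' ?_ hlimit
    filter_upwards [eventually_nhdsWithin_of_eventually_nhds hmemB] with q hq
    have h1 : Dq Q q (pB q) (eB q) = Df (γB q) e₁ := hDqQ (γB q) hq.1
    have h2 : Dp P q (pB q) (eB q) = Dg (γB q) e₂ := hDpP (γB q) hq.1
    rw [h1, h2]
  -- ===== the A-branch =====
  set IA : Set ℝ := Set.Ioo (-rA) rA with hIAdef
  have hIAo : IsOpen IA := isOpen_Ioo
  have h0IA : (0:ℝ) ∈ IA := ⟨by linarith, hrA⟩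
  have hqAd : HasDerivAt qA (deriv qA 0) 0 :=
    ((hqA.contDiffAt (hIAo.mem_nhds h0IA)).differentiableAt (by simp)).hasDerivAt
  have hpAd : HasDerivAt pA (deriv pA 0) 0 :=
    ((hpA.contDiffAt (hIAo.mem_nhds h0IA)).differentiableAt (by simp)).hasDerivAt
  set γA : ℝ → ℝ × ℝ × ℝ := fun t => (qA t, pA t, t) with hγAdef
  have hγA : HasDerivAt γA (deriv qA 0, deriv pA 0, 1) 0 :=
    hqAd.prodMk (hpAd.prodMk (hasDerivAt_id 0))
  have hγA0 : γA 0 = z0 := by rw [hγAdef, hz0]; simp [hqA0, hpA0]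
  have hmemA : ∀ᶠ t in 𝓝 (0:ℝ), γA t ∈ U ∧ t ∈ IA := by
    have h1 : ∀ᶠ t in 𝓝 (0:ℝ), γA t ∈ U :=
      hγA.continuousAt.preimage_mem_nhds (by rw [hγA0]; exact hU.mem_nhds hU0)
    exact h1.and (hIAo.mem_nhds h0IA)
  have hDfU : HasFDerivAt f (Df z0) (γA 0) := by rw [hγA0]; exact hDf z0 hU0
  have hfA : HasDerivAt (fun t => f (γA t)) (Df z0 (deriv qA 0, deriv pA 0, 1)) 0 :=
    hDfU.comp_hasDerivAt 0 hγA
  have hfAev : (fun t => f (γA t)) =ᶠ[𝓝 (0:ℝ)] qA := by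
    filter_upwards [hmemA] with t ht
    exact (hfixA t ht.2).1
  have hqAu : Df z0 (deriv qA 0, deriv pA 0, 1) = deriv qA 0 :=
    hfA.unique (hqAd.congr_of_eventuallyEq hfAev)
  have hpA' : deriv pA 0 = 0 := by
    rw [clm_expand (Df z0) (deriv qA 0) (deriv pA 0) 1, ← he₁, ← he₂, ← he₃, vf1, vf3] at hqAu
    simp only [smul_eq_mul, mul_one, mul_zero, add_zero, one_mul] at hqAu
    have h2 : deriv pA 0 * Df z0 e₂ = 0 := by linarith [hqAu]
    rcases mul_eq_zero.mp h2 with h | h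
    · exact h
    · exact absurd h ha
  have hpAd0 : HasDerivAt pA 0 0 := by
    have h := hpAd; rw [hpA'] at h; exact h
  have hγA' : HasDerivAt γA (deriv qA 0, 0, 1) 0 :=
    hqAd.prodMk (hpAd0.prodMk (hasDerivAt_id 0))
  have hTrAd : HasDerivAt (fun t => Df (γA t) e₁ + Dg (γA t) e₂)
      (D2f z0 (deriv qA 0, 0, 1) e₁ + D2g z0 (deriv qA 0, 0, 1) e₂) 0 :=
    (hasDerivAt_clm_comp1 hγA' hγA0 (hD2f z0 hU0) e₁).add
      (hasDerivAt_clm_comp1 hγA' hγA0 (hD2g z0 hU0) e₂)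
  have hTrAev : (fun t => Dq Q (qA t) (pA t) t + Dp P (qA t) (pA t) t)
      =ᶠ[𝓝 (0:ℝ)] fun t => Df (γA t) e₁ + Dg (γA t) e₂ := by
    filter_upwards [hmemA] with t ht
    have h1 : Dq Q (qA t) (pA t) t = Df (γA t) e₁ := hDqQ (γA t) ht.1
    have h2 : Dp P (qA t) (pA t) t = Dg (γA t) e₂ := hDpP (γA t) ht.1
    rw [h1, h2]
  have hTrAv : deriv (fun t => Dq Q (qA t) (pA t) t + Dp P (qA t) (pA t) t) 0
      = Df z0 e₂ * D2g z0 e₃ e₁ := by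
    rw [hTrAev.deriv_eq, hTrAd.deriv, clm_expand (D2f z0) (deriv qA 0) 0 1,
      clm_expand (D2g z0) (deriv qA 0) 0 1, ← he₁, ← he₂, ← he₃]
    simp only [ContinuousLinearMap.add_apply, ContinuousLinearMap.smul_apply, smul_eq_mul,
      zero_smul, ContinuousLinearMap.zero_apply, zero_mul, mul_zero, add_zero, zero_add,
      one_mul, one_smul]
    linear_combination (deriv qA 0) * I1 + I3
  -- ===== conclusion =====
  have hy13 : D2g z0 e₁ e₃ = D2g z0 e₃ e₁ := hsymm e₁ e₃
  have hΦ2 : Φ = -(2 * (Df z0 e₂ * D2g z0 e₃ e₁) * ε2 0) := by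
    rw [hΦv]
    linear_combination I4 + p2 0 * I2 + ε2 0 * I3 + Df z0 e₂ * I6v
      - 2 * D2g z0 e₁ e₂ * I5v - 2 * Df z0 e₂ * ε2 0 * hy13
  refine ⟨Φ / ε2 0, hmain, ?_⟩
  rw [hTrAv, hΦ2]
  field_simp
  ring
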